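/- For each 0 < ε₁, ε₂ < 1 there exists d₀ = d₀(ε₁, ε₂) such that the following holds for every n ≥ d ≥ d₀ and every x ≥ 1. Let G be an n-vertex (ε₁, ε₂·d)-expander with minimum degree δ(G) ≥ d − 1. Let A, B ⊆ V(G) with |A|, |B| ≥ x, and let W ⊆ V(G)∖(A ∪ B) satisfy |W| ≤ ε₁·x / (4·log²(15n/(ε₂d))). Then there is an A,B-path in G − W of length at most (100/ε₁)·log³(15n/(ε₂d)). -/

import Mathlib

open scoped BigOperators

/-- The average degree of a graph `G`: `(1/|G|) * sum of degrees`. -/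
noncomputable def avgDeg {V : Type*} (G : SimpleGraph V) : Real :=
  (finsum fun v : V => ((G.neighborSet v).ncard : Real)) / (Nat.card V : Real)

/-- The function `eps(x, eps1, k)` from the definition of robust sublinear expanders. -/
noncomputable def epsFun (eps1 k x : Real) : Real :=
  if x < k / 5 then 0 else eps1 / (Real.log (15 * x / k)) ^ 2

/-- The external neighbourhood of a vertex set `X` in a graph `H`. -/
def extNbr {V : Type*} (H : SimpleGraph V) (X : Set V) : Set V :=
  {w : V | w ∉ X ∧ ∃ v ∈ X, H.Adj v w}

/-- `G` is an `(eps1, k)`-robust-expander. -/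
def IsExpander {V : Type*} (G : SimpleGraph V) (eps1 k : Real) : Prop :=
  ∀ X : Set V, k / 2 ≤ (X.ncard : Real) → (X.ncard : Real) ≤ (Nat.card V : Real) / 2 →
    ∀ F : SimpleGraph V, F ≤ G →
      (F.edgeSet.ncard : Real) ≤ avgDeg G * epsFun eps1 k (X.ncard) * (X.ncard : Real) →
      epsFun eps1 k (X.ncard) * (X.ncard : Real) ≤ ((extNbr (G \ F) X).ncard : Real)

/-- The minimum degree of `G` is at least `d`. -/
def minDegGe {V : Type*} (G : SimpleGraph V) (d : Real) : Prop :=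
  ∀ v : V, d ≤ ((G.neighborSet v).ncard : Real)

/-!
Grow balls in `G - W` around `A` and around `B`. Put `k = ε₂ d` and `L = log (15 n / k)`. Once a
ball `X` has between `k / 2` and `n / 2` vertices, robust expansion (with nothing deleted) gives
`|N(X)| ≥ ε₁ |X| / L²`. Since `|W| ≤ ε₁ x / (4 L²) ≤ ε₁ |X| / (4 L²)`, the next ball is at least
`(1 + ε₁ / (2 L²))` times as large. The minimum degree makes the ball of radius one reach `k / 2`.
After `⌈4 L³ / ε₁⌉` more steps, `(1 + ε₁ / (2 L²))` raised to that power is at least `e^L = 15 n / k`,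
so both balls have more than `n / 2` vertices and must meet. This gives an `A`,`B`-walk avoiding
`W`, and a shortest such walk is a path that meets `A ∪ B` only at its ends.
-/

namespace SimpleGraph

variable {V : Type*} {G : SimpleGraph V} {W : Set V}

variable (G W) in
def ballAvoiding (A : Set V) : ℕ → Set V
  | 0 => A
  | i + 1 => ballAvoiding A i ∪ {w | w ∉ W ∧ ∃ v ∈ ballAvoiding A i, G.Adj v w}

lemma ballAvoiding_mono (A : Set V) : Monotone (G.ballAvoiding W A) :=
  monotone_nat_of_le_succ fun _ => Set.subset_union_left

lemma subset_ballAvoiding (A : Set V) (i : ℕ) : A ⊆ G.ballAvoiding W A i :=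
  ballAvoiding_mono A (Nat.zero_le i)

lemma exists_walk_of_mem_ballAvoiding {A : Set V} (hA : Disjoint A W) :
    ∀ {i : ℕ} {v : V}, v ∈ G.ballAvoiding W A i →
      ∃ a ∈ A, ∃ p : G.Walk a v, p.length ≤ i ∧ ∀ y ∈ p.support, y ∉ W
  | 0, v, hv => ⟨v, hv, .nil, le_rfl, by simpa using hA.notMem_of_mem_left hv⟩
  | i + 1, v, .inl hv => by
    obtain ⟨a, ha, p, hpl, hpW⟩ := exists_walk_of_mem_ballAvoiding hA hv
    exact ⟨a, ha, p, hpl.trans i.le_succ, hpW⟩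
  | i + 1, v, .inr ⟨hvW, u, hu, huv⟩ => by
    obtain ⟨a, ha, p, hpl, hpW⟩ := exists_walk_of_mem_ballAvoiding hA hu
    refine ⟨a, ha, p.concat huv, by simpa using hpl, fun y hy => ?_⟩
    rw [Walk.support_concat, List.mem_append, List.mem_singleton] at hy
    exact hy.elim (hpW y) (· ▸ hvW)

lemma ncard_ballAvoiding_add_ncard_extNbr_le [Finite V] (A : Set V) (i : ℕ) :
    (G.ballAvoiding W A i).ncard + (extNbr G (G.ballAvoiding W A i)).ncard ≤
      (G.ballAvoiding W A (i + 1)).ncard + W.ncard := by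
  set X := G.ballAvoiding W A i
  have hdisj : Disjoint X (extNbr G X \ W) :=
    Set.disjoint_right.mpr fun _ hw => hw.1.1
  have hsub : X ∪ extNbr G X \ W ⊆ G.ballAvoiding W A (i + 1) :=
    Set.union_subset_union_right _ fun _ hw => ⟨hw.2, hw.1.2⟩
  have := Set.ncard_le_ncard_sdiff_add_ncard (extNbr G X) W
  have := Set.ncard_union_eq hdisj ▸ Set.ncard_le_ncard hsub
  omega

lemma ncard_ballAvoiding_one_ge [Finite V] {δ : ℝ} (hδ : minDegGe G δ) {A : Set V} {v : V}
    (hv : v ∈ A) : δ + 1 - W.ncard ≤ (G.ballAvoiding W A 1).ncard := by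
  have hsub : insert v (G.neighborSet v) \ W ⊆ G.ballAvoiding W A 1 := by
    rintro w ⟨rfl | hw, hwW⟩
    · exact subset_ballAvoiding A 1 hv
    · exact .inr ⟨hwW, v, hv, hw⟩
  have hins : (insert v (G.neighborSet v)).ncard = (G.neighborSet v).ncard + 1 :=
    Set.ncard_insert_of_notMem (by simp)
  have h₁ := Set.ncard_le_ncard_sdiff_add_ncard (insert v (G.neighborSet v)) W
  have h₂ := Set.ncard_le_ncard hsub
  have h₃ := hδ v
  rw [hins] at h₁
  have : ((G.neighborSet v).ncard : ℝ) + 1 ≤ (G.ballAvoiding W A 1).ncard + W.ncard := by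
    exact_mod_cast h₁.trans (Nat.add_le_add_right h₂ _)
  linarith

lemma exists_walk_of_lt_ncard_add_ncard [Finite V] {A B : Set V} (hA : Disjoint A W)
    (hB : Disjoint B W) {r : ℕ}
    (h : Nat.card V < (G.ballAvoiding W A r).ncard + (G.ballAvoiding W B r).ncard) :
    ∃ a ∈ A, ∃ b ∈ B, ∃ p : G.Walk a b, p.length ≤ 2 * r ∧ ∀ y ∈ p.support, y ∉ W := by
  obtain ⟨v, hvA, hvB⟩ := Set.nonempty_inter_of_lt_ncard_add_ncard h
  obtain ⟨a, ha, p, hpl, hpW⟩ := exists_walk_of_mem_ballAvoiding hA hvA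
  obtain ⟨b, hb, q, hql, hqW⟩ := exists_walk_of_mem_ballAvoiding hB hvB
  refine ⟨a, ha, b, hb, p.append q.reverse, by simp; omega, fun y hy => ?_⟩
  rw [Walk.mem_support_append_iff, Walk.support_reverse, List.mem_reverse] at hy
  exact hy.elim (hpW y) (hqW y)

theorem exists_isPath_of_walk {A B : Set V} {a b : V} (p : G.Walk a b) (ha : a ∈ A) (hb : b ∈ B)
    (hpW : ∀ y ∈ p.support, y ∉ W) :
    ∃ (a' b' : V) (q : G.Walk a' b'), a' ∈ A ∧ b' ∈ B ∧ q.IsPath ∧ (∀ y ∈ q.support, y ∉ W) ∧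
      (∀ y ∈ q.support, y ∈ A ∪ B → y = a' ∨ y = b') ∧ q.length ≤ p.length := by
  classical
  induction h : p.length using Nat.strong_induction_on generalizing a b with
  | _ ℓ ih =>
  by_cases hA : ∃ y ∈ p.support, y ∈ A ∧ y ≠ a
  · obtain ⟨y, hy, hyA, hya⟩ := hA
    have hlt : (p.dropUntil y hy).length < ℓ := h ▸ Walk.length_dropUntil_lt_length hy hya
    obtain ⟨a', b', q, ha', hb', hq, hqW, hqAB, hql⟩ := ih _ hlt (p.dropUntil y hy) hyA hb
      (fun z hz => hpW z (p.support_dropUntil_subset_support hy hz)) rfl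
    exact ⟨a', b', q, ha', hb', hq, hqW, hqAB, hql.trans hlt.le⟩
  by_cases hB : ∃ y ∈ p.support, y ∈ B ∧ y ≠ b
  · obtain ⟨y, hy, hyB, hyb⟩ := hB
    have hlt : (p.takeUntil y hy).length < ℓ := h ▸ Walk.length_takeUntil_lt_length hy hyb
    obtain ⟨a', b', q, ha', hb', hq, hqW, hqAB, hql⟩ := ih _ hlt (p.takeUntil y hy) ha hyB
      (fun z hz => hpW z (p.support_takeUntil_subset_support hy hz)) rfl
    exact ⟨a', b', q, ha', hb', hq, hqW, hqAB, hql.trans hlt.le⟩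
  push Not at hA hB
  have hsupp := p.support_bypass_subset_support
  refine ⟨a, b, p.bypass, ha, hb, p.bypass_isPath, fun y hy => hpW y (hsupp hy),
    fun y hy hyAB => ?_, h ▸ p.length_bypass_le_length⟩
  exact hyAB.imp (hA y (hsupp hy)) (hB y (hsupp hy))

end SimpleGraph

lemma epsFun_nonneg {eps1 : ℝ} (heps : 0 ≤ eps1) (k y : ℝ) : 0 ≤ epsFun eps1 k y := by
  unfold epsFun; split_ifs <;> positivity

lemma div_log_sq_le_epsFun {eps1 k y m : ℝ} (heps : 0 ≤ eps1) (hk : 0 < k) (hky : k / 5 ≤ y)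
    (hym : y ≤ m) : eps1 / Real.log (15 * m / k) ^ 2 ≤ epsFun eps1 k y := by
  have hy : 0 < y := by linarith
  have hlog : 0 < Real.log (15 * y / k) :=
    Real.log_pos (by rw [lt_div_iff₀ hk]; linarith)
  have hlog_le : Real.log (15 * y / k) ≤ Real.log (15 * m / k) :=
    Real.log_le_log (by positivity) (by gcongr)
  rw [epsFun, if_neg hky.not_gt]
  gcongr

lemma IsExpander.div_log_sq_mul_le_ncard_extNbr {V : Type*} [Finite V] {G : SimpleGraph V}
    {eps1 k : ℝ} (hG : IsExpander G eps1 k) (heps : 0 ≤ eps1) (hk : 0 < k) {X : Set V}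
    (hX : k / 2 ≤ X.ncard) (hX' : (X.ncard : ℝ) ≤ Nat.card V / 2) :
    eps1 / Real.log (15 * Nat.card V / k) ^ 2 * X.ncard ≤ (extNbr G X).ncard := by
  have hε := div_log_sq_le_epsFun heps hk (by linarith) (Nat.cast_le.mpr X.ncard_le_card)
  have hF : ((⊥ : SimpleGraph V).edgeSet.ncard : ℝ) ≤
      avgDeg G * epsFun eps1 k X.ncard * X.ncard := by
    have havg : 0 ≤ avgDeg G := div_nonneg (finsum_nonneg fun _ => by positivity) (by positivity)
    rw [SimpleGraph.edgeSet_bot, Set.ncard_empty, Nat.cast_zero]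
    have := epsFun_nonneg heps k X.ncard
    positivity
  simpa using (mul_le_mul_of_nonneg_right hε (by positivity)).trans (hG X hX hX' ⊥ bot_le hF)

lemma lt_of_geometric_growth {f : ℕ → ℝ} {m c : ℝ} (hc : 0 ≤ c) (hf : Monotone f)
    (hstep : ∀ i, f i ≤ m → (1 + c) * f i ≤ f (i + 1)) {T : ℕ} (hT : m < (1 + c) ^ T * f 0) :
    m < f T := by
  suffices ∀ i, m < f i ∨ (1 + c) ^ i * f 0 ≤ f i from (this T).elim id hT.trans_le
  intro i
  induction i with
  | zero => simp
  | succ i ih =>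
    by_cases hi : f i ≤ m
    · refine .inr ?_
      calc (1 + c) ^ (i + 1) * f 0 = (1 + c) * ((1 + c) ^ i * f 0) := by ring
        _ ≤ (1 + c) * f i := by gcongr; exact ih.resolve_left hi.not_gt
        _ ≤ f (i + 1) := hstep i hi
    · exact .inl ((not_le.mp hi).trans_le (hf i.le_succ))

lemma exp_le_one_add_pow {c L : ℝ} {T : ℕ} (hc : 0 ≤ c) (hc' : c ≤ 1) (hL : L ≤ T * (c / 2)) :
    Real.exp L ≤ (1 + c) ^ T := by
  have hhalf : Real.exp (c / 2) ≤ 1 + c := by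
    calc Real.exp (c / 2) ≤ 1 / (1 - c / 2) :=
          Real.exp_bound_div_one_sub_of_interval (by linarith) (by linarith)
      _ ≤ 1 + c := by rw [div_le_iff₀ (by linarith)]; nlinarith
  calc Real.exp L ≤ Real.exp (T * (c / 2)) := Real.exp_le_exp.mpr hL
    _ = Real.exp (c / 2) ^ T := Real.exp_nat_mul _ T
    _ ≤ (1 + c) ^ T := by gcongr

lemma two_lt_log_fifteen_mul_div {k m : ℝ} (hk : 0 < k) (hkm : k ≤ m) :
    2 < Real.log (15 * m / k) := by
  have h15 : 2 < Real.log 15 := by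
    have := Real.log_two_gt_d9
    have h8 : Real.log 8 = 3 * Real.log 2 := by
      rw [show (8 : ℝ) = 2 ^ 3 by norm_num, Real.log_pow]; norm_num
    linarith [Real.log_lt_log (by norm_num) (show (8 : ℝ) < 15 by norm_num)]
  exact h15.trans_le (Real.log_le_log (by norm_num) (by rw [le_div_iff₀ hk]; linarith))

lemma two_mul_ceil_add_two_le {M : ℝ} (hM : 1 ≤ M) : 2 * (⌈4 * M⌉₊ : ℝ) + 2 ≤ 100 * M := by
  have := Nat.ceil_lt_add_one (show 0 ≤ 4 * M by linarith)
  linarith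

namespace SimpleGraph

variable {V : Type*} [Finite V] {G : SimpleGraph V} {eps1 k d x : ℝ} {S W : Set V}

lemma one_add_mul_ncard_ballAvoiding_le_succ (hG : IsExpander G eps1 k) (heps : 0 ≤ eps1)
    (hk : 0 < k) (hW : W.ncard ≤ eps1 * x / (4 * Real.log (15 * Nat.card V / k) ^ 2)) {i : ℕ}
    (hlo : k / 2 ≤ (G.ballAvoiding W S i).ncard)
    (hhi : ((G.ballAvoiding W S i).ncard : ℝ) ≤ Nat.card V / 2)
    (hx : x ≤ (G.ballAvoiding W S i).ncard) :
    (1 + eps1 / (2 * Real.log (15 * Nat.card V / k) ^ 2)) * (G.ballAvoiding W S i).ncard ≤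
      (G.ballAvoiding W S (i + 1)).ncard := by
  have hN := hG.div_log_sq_mul_le_ncard_extNbr heps hk hlo hhi
  set L := Real.log (15 * Nat.card V / k)
  set X := G.ballAvoiding W S i
  have hcount : (X.ncard : ℝ) + (extNbr G X).ncard ≤ (G.ballAvoiding W S (i + 1)).ncard + W.ncard :=
    mod_cast ncard_ballAvoiding_add_ncard_extNbr_le S i
  have hWX : (W.ncard : ℝ) ≤ eps1 / L ^ 2 * X.ncard / 4 :=
    calc (W.ncard : ℝ) ≤ eps1 * x / (4 * L ^ 2) := hW
      _ ≤ eps1 * X.ncard / (4 * L ^ 2) := by gcongr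
      _ = eps1 / L ^ 2 * X.ncard / 4 := by ring
  have : eps1 / (2 * L ^ 2) * X.ncard = eps1 / L ^ 2 * X.ncard / 2 := by ring
  linarith

lemma div_two_le_ncard_ballAvoiding_one (hδ : minDegGe G (d - 1)) (hkd : k ≤ d) (hx : 0 < x)
    (hS : x ≤ S.ncard) (hW : W.ncard ≤ x / 16) : k / 2 ≤ (G.ballAvoiding W S 1).ncard := by
  by_cases hSk : k / 2 ≤ S.ncard
  · exact hSk.trans (mod_cast Set.ncard_le_ncard (subset_ballAvoiding S 1))
  obtain ⟨v, hv⟩ := Set.nonempty_of_ncard_ne_zero (s := S) (by rintro h; simp [h] at hS; linarith)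
  have := ncard_ballAvoiding_one_ge (W := W) hδ hv
  linarith

lemma half_lt_ncard_ballAvoiding (hG : IsExpander G eps1 k) (hδ : minDegGe G (d - 1))
    (heps : 0 < eps1) (heps' : eps1 ≤ 1) (hk : 0 < k) (hkd : k ≤ d) (hdn : d ≤ Nat.card V)
    (hx : 0 < x) (hS : x ≤ S.ncard)
    (hW : W.ncard ≤ eps1 * x / (4 * Real.log (15 * Nat.card V / k) ^ 2)) :
    (Nat.card V : ℝ) / 2 <
      (G.ballAvoiding W S (⌈4 * (Real.log (15 * Nat.card V / k) ^ 3 / eps1)⌉₊ + 1)).ncard := by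
  have hL := two_lt_log_fifteen_mul_div hk (hkd.trans hdn)
  set L := Real.log (15 * Nat.card V / k)
  set T := ⌈4 * (L ^ 3 / eps1)⌉₊
  set c := eps1 / (2 * L ^ 2)
  set f : ℕ → ℝ := fun i => (G.ballAvoiding W S (i + 1)).ncard
  have hn : 0 < (Nat.card V : ℝ) := by linarith
  have hf : Monotone f := fun i j hij =>
    Nat.cast_le.mpr (Set.ncard_le_ncard (ballAvoiding_mono S (Nat.succ_le_succ hij)))
  have hx_le (i : ℕ) : x ≤ f i :=
    hS.trans (Nat.cast_le.mpr (Set.ncard_le_ncard (subset_ballAvoiding S (i + 1))))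
  have hf0 : k / 2 ≤ f 0 := by
    refine div_two_le_ncard_ballAvoiding_one hδ hkd hx hS (hW.trans ?_)
    calc eps1 * x / (4 * L ^ 2) ≤ 1 * x / (4 * 2 ^ 2) := by gcongr
      _ = x / 16 := by ring
  have hc : 0 ≤ c := by positivity
  have hc' : c ≤ 1 :=
    calc eps1 / (2 * L ^ 2) ≤ 1 / (2 * 2 ^ 2) := by gcongr
      _ ≤ 1 := by norm_num
  have hstep (i : ℕ) (hi : f i ≤ Nat.card V / 2) : (1 + c) * f i ≤ f (i + 1) :=
    one_add_mul_ncard_ballAvoiding_le_succ hG heps.le hk hW ((hf0.trans (hf i.zero_le))) hi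
      (hx_le i)
  refine lt_of_geometric_growth hc hf hstep ?_
  have hexp : 15 * Nat.card V / k ≤ (1 + c) ^ T := by
    rw [← Real.exp_log (show 0 < 15 * (Nat.card V : ℝ) / k by positivity)]
    refine exp_le_one_add_pow hc hc' ?_
    calc L = 4 * (L ^ 3 / eps1) * (c / 2) := by simp only [c]; field_simp; ring
      _ ≤ T * (c / 2) := by gcongr; exact Nat.le_ceil _
  calc (Nat.card V : ℝ) / 2 < 15 * Nat.card V / k * (k / 2) := by
        field_simp; linarith
    _ ≤ (1 + c) ^ T * f 0 := by gcongr

end SimpleGraph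

theorem statement_4 (eps1 eps2 : Real)
    (heps1 : 0 < eps1) (heps1' : eps1 < 1) (heps2 : 0 < eps2) (heps2' : eps2 < 1) :
    ∃ d₀ : Real, ∀ (V : Type) [Fintype V] (G : SimpleGraph V) (n : Nat) (d x : Real),
      Nat.card V = n → d₀ ≤ d → d ≤ (n : Real) → 1 ≤ x →
      IsExpander G eps1 (eps2 * d) → minDegGe G (d - 1) →
      ∀ A B W : Set V, x ≤ (A.ncard : Real) → x ≤ (B.ncard : Real) →
        W ⊆ (A ∪ B)ᶜ →
        (W.ncard : Real) ≤ eps1 * x / (4 * (Real.log (15 * n / (eps2 * d))) ^ 2) →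
        ∃ (a b : V) (p : G.Walk a b), a ∈ A ∧ b ∈ B ∧ p.IsPath ∧
          (∀ y ∈ p.support, y ∉ W) ∧
          (∀ y ∈ p.support, y ∈ A ∪ B → y = a ∨ y = b) ∧
          (p.length : Real) ≤ (100 / eps1) * (Real.log (15 * n / (eps2 * d))) ^ 3 := by
  refine ⟨1, fun V _ G n d x hn hd hdn hx hG hδ A B W hA hB hWAB hW => ?_⟩
  subst hn
  have hk : 0 < eps2 * d := mul_pos heps2 (by linarith)
  have hkd : eps2 * d ≤ d := mul_le_of_le_one_left (by linarith) heps2'.le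
  have hL := two_lt_log_fifteen_mul_div hk (hkd.trans hdn)
  have hballA := SimpleGraph.half_lt_ncard_ballAvoiding hG hδ heps1 heps1'.le hk hkd hdn
    (by linarith) hA hW
  have hballB := SimpleGraph.half_lt_ncard_ballAvoiding hG hδ heps1 heps1'.le hk hkd hdn
    (by linarith) hB hW
  set L := Real.log (15 * Nat.card V / (eps2 * d))
  set T := ⌈4 * (L ^ 3 / eps1)⌉₊
  have hABW : Disjoint (A ∪ B) W := Set.subset_compl_iff_disjoint_left.mp hWAB
  obtain ⟨a, ha, b, hb, p, hpl, hpW⟩ := SimpleGraph.exists_walk_of_lt_ncard_add_ncard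
    (hABW.mono_left Set.subset_union_left) (hABW.mono_left Set.subset_union_right)
    (r := T + 1) (by rw [← Nat.cast_lt (α := ℝ), Nat.cast_add]; linarith)
  obtain ⟨a', b', q, ha', hb', hq, hqW, hqAB, hql⟩ :=
    SimpleGraph.exists_isPath_of_walk p ha hb hpW
  refine ⟨a', b', q, ha', hb', hq, hqW, hqAB, ?_⟩
  have hM : 1 ≤ L ^ 3 / eps1 := by
    rw [le_div_iff₀ heps1]
    nlinarith
  calc (q.length : ℝ) ≤ 2 * (T + 1) := by exact_mod_cast hql.trans hpl
    _ ≤ 100 * (L ^ 3 / eps1) := by linarith [two_mul_ceil_add_two_le hM]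
    _ = 100 / eps1 * L ^ 3 := by ring
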